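/- Consider the binary regression model f_θ(y|x) = H(α+βx)^y (1−H(α+βx))^{1−y} for y ∈ {0,1}, where θ = (α, β) ∈ ℝ² and H is either the logistic cdf H(a) = 1/(1+e^{−a}) or the probit cdf H(a) = Φ(a) (Φ the standard normal cdf), with μ the counting measure on {0,1}. Fix x₁ ∈ ℝ, d > 0, and θ₀ = (α₀, β₀) with β₀ > 0. Then for any sequence (X_i) of random variables taking values in the lattice x₁ + dℤ (in particular, for the Bruceton design), the family is S-DQM at θ₀: for every h ∈ ℝ², ∑_{i=1}^n E[D_{θ₀,h/√n}(X_i)] → 0 as n → ∞. -/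

import Mathlib

/-!
Write `a = α₀ + β₀x` for the linear predictor and `s = (h₁ + h₂x)/√n` for its increment. Each of
the two summands of `D` is the squared first-order Taylor remainder of `√H` or `√(1 - H)` at `a`,
so it is at most `(s² · sup |(√q)''|)²` over the segment from `a` to `a + s`. For both links
`(√H)''` and `(√(1 - H))''` are `O(1/(1 + b²))` at `b`, and because `β₀ > 0` every predictor `b`
on that segment satisfies `(h₁ + h₂x)² ≤ K (1 + b²)` uniformly in `x`. Hence
`D_{θ₀,h/√n}(x) = O(1/n²)` uniformly in `x`, and the sum of `n` expectations is `O(1/n)`,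
whatever the distribution of the `X_i`.
-/

open Filter MeasureTheory

/-- The logistic sigmoid `σ(a) = 1/(1+e^{−a})`. -/
noncomputable def logisticSigmoid (a : ℝ) : ℝ := 1 / (1 + Real.exp (-a))

/-- The standard normal cumulative distribution function. -/
noncomputable def stdNormalCDF (a : ℝ) : ℝ :=
  ∫ t in Set.Iic a, (Real.sqrt (2 * Real.pi))⁻¹ * Real.exp (-(t ^ 2) / 2)

/-- The binary regression model `f_θ(y|x) = H(α+βx)^y (1−H(α+βx))^{1−y}`, `y ∈ {0,1}`,
with parameter `θ = (α, β)`. -/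
noncomputable def binModel (H : ℝ → ℝ) (θ : ℝ × ℝ) (x : ℝ) (y : Bool) : ℝ :=
  if y then H (θ.1 + θ.2 * x) else 1 - H (θ.1 + θ.2 * x)

/-- `D_{θ,h}(x)` for the binary regression model (counting measure on `{0,1}`):
`∑_{y∈{0,1}} (√f_{θ+h}(y|x) − √f_θ(y|x) − (1/2) h^T u_θ(y|x) √f_θ(y|x))²`, where
`h^T u_θ(y|x)` is the directional derivative of `θ ↦ log f_θ(y|x)` in direction `h`. -/
noncomputable def DbinQM (H : ℝ → ℝ) (θ h : ℝ × ℝ) (x : ℝ) : ℝ :=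
  ∑ y : Bool, (Real.sqrt (binModel H (θ + h) x y) - Real.sqrt (binModel H θ x y) -
    (1 / 2) * (fderiv ℝ (fun t => Real.log (binModel H t x y)) θ h) *
      Real.sqrt (binModel H θ x y)) ^ 2

open Set ProbabilityTheory

theorem abs_sub_sub_deriv_mul_le {g g' g'' : ℝ → ℝ} (hg : ∀ t, HasDerivAt g (g' t) t)
    (hg' : ∀ t, HasDerivAt g' (g'' t) t) {a s Q : ℝ}
    (hQ : ∀ r ∈ Icc (0 : ℝ) 1, s ^ 2 * |g'' (a + r * s)| ≤ Q) :
    |g (a + s) - g a - g' a * s| ≤ Q := by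
  have hQ0 : 0 ≤ Q := (by positivity : (0 : ℝ) ≤ _).trans (hQ 0 (left_mem_Icc.2 zero_le_one))
  have hline (r : ℝ) : HasDerivAt (fun r => a + r * s) s r := by
    simpa using ((hasDerivAt_id r).mul_const s).const_add a
  have hslope : ∀ r ∈ Icc (0 : ℝ) 1, ‖g' (a + r * s) * s - g' (a + 0 * s) * s‖ ≤ Q := by
    intro r hr
    have := (convex_Icc (0 : ℝ) 1).norm_image_sub_le_of_norm_hasDerivWithin_le
      (f := fun r => g' (a + r * s) * s)
      (fun u _ => (((hg' _).comp u (hline u)).mul_const s).hasDerivWithinAt)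
      (C := Q) (fun u hu => (le_of_eq (by
        rw [Real.norm_eq_abs, abs_mul, abs_mul, ← sq_abs s]; ring)).trans (hQ u hu))
      (left_mem_Icc.2 zero_le_one) hr
    refine this.trans ?_
    simpa [abs_of_nonneg hr.1] using mul_le_of_le_one_right hQ0 hr.2
  have := (convex_Icc (0 : ℝ) 1).norm_image_sub_le_of_norm_hasDerivWithin_le
    (f := fun r => g (a + r * s) - r * (g' a * s))
    (fun u _ => (((hg _).comp u (hline u)).sub ((hasDerivAt_id u).mul_const _)).hasDerivWithinAt)
    (fun u hu => by simpa using hslope u hu)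
    (left_mem_Icc.2 zero_le_one) (right_mem_Icc.2 zero_le_one)
  simpa [sub_sub, add_comm] using this

noncomputable def sqrtDeriv2 (q q' q'' : ℝ → ℝ) (t : ℝ) : ℝ :=
  q'' t / (2 * √(q t)) - q' t ^ 2 / (4 * q t * √(q t))

section

variable {q q' q'' : ℝ → ℝ}

theorem hasDerivAt_div_two_mul_sqrt (hq : ∀ t, 0 < q t) (hq' : ∀ t, HasDerivAt q (q' t) t)
    (hq'' : ∀ t, HasDerivAt q' (q'' t) t) (t : ℝ) :
    HasDerivAt (fun u => q' u / (2 * √(q u))) (sqrtDeriv2 q q' q'' t) t := by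
  have hs : 0 < √(q t) := Real.sqrt_pos.2 (hq t)
  refine ((hq'' t).div (((hq' t).sqrt (hq t).ne').const_mul 2) (by positivity)).congr_deriv ?_
  have hsq : √(q t) ^ 2 = q t := Real.sq_sqrt (hq t).le
  unfold sqrtDeriv2
  field_simp
  rw [hsq]
  field_simp [(hq t).ne']
  ring

theorem one_add_sq_mul_abs_sqrtDeriv2_le {a m C : ℝ} (hm : 0 < m) (hmq : m ≤ q a)
    (h1 : (1 + a ^ 2) * |q'' a| ≤ C * √m) (h2 : (1 + a ^ 2) * q' a ^ 2 ≤ C * (m * √m)) :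
    (1 + a ^ 2) * |sqrtDeriv2 q q' q'' a| ≤ C := by
  have hqa : 0 < q a := hm.trans_le hmq
  have hsm : 0 < √m := Real.sqrt_pos.2 hm
  have hsq : √m ≤ √(q a) := Real.sqrt_le_sqrt hmq
  have hC : 0 ≤ C := nonneg_of_mul_nonneg_left ((by positivity : (0:ℝ) ≤ _).trans h1) hsm
  have hw : 0 < 1 + a ^ 2 := by positivity
  have hA : (1 + a ^ 2) * (|q'' a| / (2 * √(q a))) ≤ C / 2 := by
    rw [mul_div_assoc', div_le_iff₀ (by positivity)]
    nlinarith
  have hB : (1 + a ^ 2) * (q' a ^ 2 / (4 * q a * √(q a))) ≤ C / 4 := by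
    rw [mul_div_assoc', div_le_iff₀ (by positivity)]
    nlinarith [mul_le_mul hmq hsq hsm.le hqa.le]
  have htri : |sqrtDeriv2 q q' q'' a|
      ≤ |q'' a| / (2 * √(q a)) + q' a ^ 2 / (4 * q a * √(q a)) := by
    refine (abs_sub _ _).trans ?_
    rw [abs_div, abs_div, abs_of_pos (by positivity : (0:ℝ) < 2 * √(q a)),
      abs_of_pos (by positivity : (0:ℝ) < 4 * q a * √(q a)), abs_sq]
  nlinarith [mul_le_mul_of_nonneg_left htri hw.le]

theorem sq_sqrt_sub_sub_le (hq : ∀ t, 0 < q t) (hq' : ∀ t, HasDerivAt q (q' t) t)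
    (hq'' : ∀ t, HasDerivAt q' (q'' t) t) {a s Q : ℝ}
    (hQ : ∀ r ∈ Icc (0 : ℝ) 1, s ^ 2 * |sqrtDeriv2 q q' q'' (a + r * s)| ≤ Q) :
    (√(q (a + s)) - √(q a) - 1 / 2 * (q' a / q a * s) * √(q a)) ^ 2 ≤ Q ^ 2 := by
  have hs : 0 < √(q a) := Real.sqrt_pos.2 (hq a)
  have hderiv : 1 / 2 * (q' a / q a * s) * √(q a) = q' a / (2 * √(q a)) * s := by
    have hsq : √(q a) ^ 2 = q a := Real.sq_sqrt (hq a).le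
    field_simp
    rw [hsq]
    field_simp [(hq a).ne']
  rw [hderiv, ← sq_abs]
  exact pow_le_pow_left₀ (abs_nonneg _) (abs_sub_sub_deriv_mul_le (g := fun u => √(q u))
    (fun t => (hq' t).sqrt (hq t).ne') (hasDerivAt_div_two_mul_sqrt hq hq' hq'') hQ) 2

theorem fderiv_log_comp_fst_add_snd_mul {q q' : ℝ → ℝ} {θ : ℝ × ℝ} {x : ℝ}
    (hq : HasDerivAt q (q' (θ.1 + θ.2 * x)) (θ.1 + θ.2 * x)) (hpos : q (θ.1 + θ.2 * x) ≠ 0)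
    (v : ℝ × ℝ) :
    fderiv ℝ (fun t : ℝ × ℝ => Real.log (q (t.1 + t.2 * x))) θ v
      = q' (θ.1 + θ.2 * x) / q (θ.1 + θ.2 * x) * (v.1 + v.2 * x) := by
  have hlin : HasFDerivAt (fun t : ℝ × ℝ => t.1 + t.2 * x)
      (ContinuousLinearMap.fst ℝ ℝ ℝ + x • ContinuousLinearMap.snd ℝ ℝ ℝ) θ :=
    hasFDerivAt_fst.add (hasFDerivAt_snd.mul_const x)
  have hf : HasFDerivAt (fun t : ℝ × ℝ => Real.log (q (t.1 + t.2 * x)))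
      ((q' (θ.1 + θ.2 * x) / q (θ.1 + θ.2 * x)) •
        (ContinuousLinearMap.fst ℝ ℝ ℝ + x • ContinuousLinearMap.snd ℝ ℝ ℝ)) θ :=
    (hq.log hpos).comp_hasFDerivAt (h₂ := fun y => Real.log (q y)) θ hlin
  rw [hf.fderiv]
  simp [mul_add, mul_comm x]

theorem sq_sqrt_sub_sub_fderiv_log_le (hq : ∀ t, 0 < q t) (hq' : ∀ t, HasDerivAt q (q' t) t)
    (hq'' : ∀ t, HasDerivAt q' (q'' t) t) {θ v : ℝ × ℝ} {x Q : ℝ}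
    (hQ : ∀ r ∈ Icc (0 : ℝ) 1, (v.1 + v.2 * x) ^ 2 *
      |sqrtDeriv2 q q' q'' (θ.1 + θ.2 * x + r * (v.1 + v.2 * x))| ≤ Q) :
    (√(q ((θ + v).1 + (θ + v).2 * x)) - √(q (θ.1 + θ.2 * x)) -
      1 / 2 * fderiv ℝ (fun t : ℝ × ℝ => Real.log (q (t.1 + t.2 * x))) θ v *
        √(q (θ.1 + θ.2 * x))) ^ 2 ≤ Q ^ 2 := by
  rw [fderiv_log_comp_fst_add_snd_mul (hq' _) (hq _).ne',
    show (θ + v).1 + (θ + v).2 * x = θ.1 + θ.2 * x + (v.1 + v.2 * x) by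
      simp only [Prod.fst_add, Prod.snd_add]; ring]
  exact sq_sqrt_sub_sub_le hq hq' hq'' hQ

end

/-- `m` bounds both tails `H` and `1 - H` from below, and the weighted derivatives of `H` are
small against it; this makes the second derivatives of `√H` and `√(1 - H)` `O(1 / (1 + a²))`. -/
structure IsRegularLink (H H' H'' m : ℝ → ℝ) (C : ℝ) : Prop where
  hasDerivAt : ∀ a, HasDerivAt H (H' a) a
  hasDerivAt_deriv : ∀ a, HasDerivAt H' (H'' a) a
  pos : ∀ a, 0 < m a
  le : ∀ a, m a ≤ H a
  le_one_sub : ∀ a, m a ≤ 1 - H a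
  deriv2_le : ∀ a, (1 + a ^ 2) * |H'' a| ≤ C * √(m a)
  deriv_sq_le : ∀ a, (1 + a ^ 2) * H' a ^ 2 ≤ C * (m a * √(m a))

namespace IsRegularLink

variable {H H' H'' m : ℝ → ℝ} {C : ℝ}

theorem DbinQM_le (hH : IsRegularLink H H' H'' m C) {θ v : ℝ × ℝ} {x Q : ℝ}
    (hQ : ∀ r ∈ Icc (0 : ℝ) 1,
      (v.1 + v.2 * x) ^ 2 ≤ Q * (1 + ((θ + r • v).1 + (θ + r • v).2 * x) ^ 2)) :
    DbinQM H θ v x ≤ 2 * (C * Q) ^ 2 := by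
  have hQ0 : 0 ≤ Q := nonneg_of_mul_nonneg_left
    ((sq_nonneg _).trans (hQ 0 (left_mem_Icc.2 zero_le_one))) (by positivity)
  have hbound {q q' q'' : ℝ → ℝ} (hg : ∀ a, (1 + a ^ 2) * |sqrtDeriv2 q q' q'' a| ≤ C)
      (r : ℝ) (hr : r ∈ Icc (0 : ℝ) 1) : (v.1 + v.2 * x) ^ 2 *
        |sqrtDeriv2 q q' q'' (θ.1 + θ.2 * x + r * (v.1 + v.2 * x))| ≤ C * Q := by
    have hr' := hQ r hr
    rw [show (θ + r • v).1 + (θ + r • v).2 * x = θ.1 + θ.2 * x + r * (v.1 + v.2 * x) by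
      simp only [Prod.fst_add, Prod.snd_add, Prod.smul_fst, Prod.smul_snd, smul_eq_mul]; ring]
      at hr'
    generalize θ.1 + θ.2 * x + r * (v.1 + v.2 * x) = b at hr' ⊢
    calc (v.1 + v.2 * x) ^ 2 * |sqrtDeriv2 q q' q'' b|
        ≤ Q * (1 + b ^ 2) * |sqrtDeriv2 q q' q'' b| := mul_le_mul_of_nonneg_right hr' (abs_nonneg _)
      _ = Q * ((1 + b ^ 2) * |sqrtDeriv2 q q' q'' b|) := mul_assoc _ _ _
      _ ≤ Q * C := mul_le_mul_of_nonneg_left (hg b) hQ0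
      _ = C * Q := mul_comm _ _
  have hH0 a : 0 < H a := (hH.pos a).trans_le (hH.le a)
  have hH1 a : 0 < 1 - H a := (hH.pos a).trans_le (hH.le_one_sub a)
  rw [DbinQM, Fintype.sum_bool, two_mul]
  exact add_le_add
    (sq_sqrt_sub_sub_fderiv_log_le hH0 hH.hasDerivAt hH.hasDerivAt_deriv (hbound fun a =>
      one_add_sq_mul_abs_sqrtDeriv2_le (hH.pos a) (hH.le a) (hH.deriv2_le a) (hH.deriv_sq_le a)))
    (sq_sqrt_sub_sub_fderiv_log_le (q := fun a => 1 - H a) hH1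
      (fun a => (hH.hasDerivAt a).const_sub 1) (fun a => (hH.hasDerivAt_deriv a).neg)
      (hbound fun a => one_add_sq_mul_abs_sqrtDeriv2_le (hH.pos a) (hH.le_one_sub a)
        (by simpa using hH.deriv2_le a) (by simpa using hH.deriv_sq_le a)))

end IsRegularLink

theorem exists_sq_le_mul_one_add_sq (θ : ℝ × ℝ) (hβ : 0 < θ.2) (h : ℝ × ℝ) :
    ∃ K, ∀ θ' : ℝ × ℝ, ‖θ' - θ‖ ≤ min 1 (θ.2 / 2) →
      ∀ x, (h.1 + h.2 * x) ^ 2 ≤ K * (1 + (θ'.1 + θ'.2 * x) ^ 2) := by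
  set B := 2 * |h.2| / θ.2
  set A := |h.1| + B * (|θ.1| + 1)
  refine ⟨2 * (A ^ 2 + B ^ 2), fun θ' hθ' x => ?_⟩
  set b := θ'.1 + θ'.2 * x
  have h1 : |θ'.1 - θ.1| ≤ 1 := ((norm_fst_le _).trans hθ').trans (min_le_left _ _)
  have h2 : |θ'.2 - θ.2| ≤ θ.2 / 2 := ((norm_snd_le _).trans hθ').trans (min_le_right _ _)
  have hB : B * (θ.2 / 2) = |h.2| := by simp only [B]; field_simp
  have hβ' : θ.2 / 2 ≤ θ'.2 := by linarith [(abs_le.1 h2).1]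
  have hx : θ.2 / 2 * |x| ≤ |b| + |θ.1| + 1 := by
    have : θ.2 / 2 * |x| ≤ θ'.2 * |x| := mul_le_mul_of_nonneg_right hβ' (abs_nonneg x)
    have hb : θ'.2 * |x| = |b - θ'.1| := by
      rw [show b - θ'.1 = θ'.2 * x by ring, abs_mul, abs_of_pos (show 0 < θ'.2 by linarith)]
    linarith [abs_sub b θ'.1, abs_sub_abs_le_abs_sub θ'.1 θ.1]
  have habs : |h.1 + h.2 * x| ≤ A + B * |b| := by
    calc |h.1 + h.2 * x| ≤ |h.1| + B * (θ.2 / 2 * |x|) := by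
          rw [← mul_assoc, hB, ← abs_mul]; exact abs_add_le _ _
      _ ≤ A + B * |b| := by
          nlinarith [mul_le_mul_of_nonneg_left hx (by positivity : (0 : ℝ) ≤ B)]
  calc (h.1 + h.2 * x) ^ 2 = |h.1 + h.2 * x| ^ 2 := (sq_abs _).symm
    _ ≤ (A + B * |b|) ^ 2 := pow_le_pow_left₀ (abs_nonneg _) habs 2
    _ ≤ 2 * (A ^ 2 + B ^ 2) * (1 + b ^ 2) := by
        nlinarith [sq_nonneg (A - B * |b|), sq_abs b, sq_nonneg (A * |b|), sq_nonneg B]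

theorem DbinQM_nonneg (H : ℝ → ℝ) (θ v : ℝ × ℝ) (x : ℝ) : 0 ≤ DbinQM H θ v x :=
  Finset.sum_nonneg fun _ _ => sq_nonneg _

theorem IsRegularLink.tendsto_sum_integral_DbinQM {H H' H'' m : ℝ → ℝ} {C : ℝ}
    (hH : IsRegularLink H H' H'' m C) {θ₀ : ℝ × ℝ} (hβ₀ : 0 < θ₀.2)
    {Ω : Type*} [MeasurableSpace Ω] (P : Measure Ω) [IsProbabilityMeasure P]
    (X : ℕ → Ω → ℝ) (h : ℝ × ℝ) :
    Tendsto (fun n : ℕ => ∑ i ∈ Finset.Icc 1 n, ∫ ω, DbinQM H θ₀ ((√n)⁻¹ • h) (X i ω) ∂P)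
      atTop (nhds 0) := by
  obtain ⟨K, hK⟩ := exists_sq_le_mul_one_add_sq θ₀ hβ₀ h
  have hsmall : ∀ᶠ n : ℕ in atTop, ‖(√n)⁻¹ • h‖ ≤ min 1 (θ₀.2 / 2) := by
    have hv : Tendsto (fun n : ℕ => ‖(√n)⁻¹ • h‖) atTop (nhds 0) := by
      simpa using ((tendsto_inv_atTop_zero.comp (Real.tendsto_sqrt_atTop.comp
        tendsto_natCast_atTop_atTop)).smul_const h).norm
    exact hv.eventually (ge_mem_nhds (by positivity))
  have hD : ∀ᶠ n : ℕ in atTop, ∀ x, DbinQM H θ₀ ((√n)⁻¹ • h) x ≤ 2 * (C * (K / n)) ^ 2 := by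
    filter_upwards [hsmall] with n hn x
    refine hH.DbinQM_le fun r hr => ?_
    have hr : ‖θ₀ + r • (√n)⁻¹ • h - θ₀‖ ≤ min 1 (θ₀.2 / 2) := by
      rw [add_sub_cancel_left, norm_smul, Real.norm_eq_abs, abs_of_nonneg hr.1]
      exact (mul_le_of_le_one_left (norm_nonneg _) hr.2).trans hn
    calc (((√n)⁻¹ • h).1 + ((√n)⁻¹ • h).2 * x) ^ 2 = (h.1 + h.2 * x) ^ 2 / n := by
          simp only [Prod.smul_fst, Prod.smul_snd, smul_eq_mul]
          have hs : ((√(n : ℝ))⁻¹) ^ 2 = (n : ℝ)⁻¹ := by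
            rw [inv_pow, Real.sq_sqrt (Nat.cast_nonneg n)]
          linear_combination (h.1 + h.2 * x) ^ 2 * hs
      _ ≤ K / n * (1 + ((θ₀ + r • (√n)⁻¹ • h).1 + (θ₀ + r • (√n)⁻¹ • h).2 * x) ^ 2) := by
          rw [div_mul_eq_mul_div]
          exact div_le_div_of_nonneg_right (hK _ hr x) (Nat.cast_nonneg n)
  refine squeeze_zero' (Eventually.of_forall fun n => Finset.sum_nonneg fun i _ =>
    integral_nonneg fun ω => DbinQM_nonneg _ _ _ _) (hD.mono fun n hn => ?_)
    (tendsto_const_div_atTop_nhds_zero_nat (2 * (C * K) ^ 2))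
  calc ∑ i ∈ Finset.Icc 1 n, ∫ ω, DbinQM H θ₀ ((√n)⁻¹ • h) (X i ω) ∂P
      ≤ ∑ i ∈ Finset.Icc 1 n, 2 * (C * (K / n)) ^ 2 := Finset.sum_le_sum fun i _ =>
        (integral_mono_of_nonneg (Eventually.of_forall fun ω => DbinQM_nonneg _ _ _ _)
          (integrable_const _) (Eventually.of_forall fun ω => hn _)).trans_eq (by simp)
    _ = 2 * (C * K) ^ 2 / n := by
        rcases eq_or_ne (n : ℝ) 0 with hn0 | hn0
        · simp [hn0]
        · simp only [Finset.sum_const, Nat.card_Icc, add_tsub_cancel_right, nsmul_eq_mul]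
          field_simp

theorem logisticSigmoid_eq_sigmoid : logisticSigmoid = Real.sigmoid := by
  funext a
  rw [logisticSigmoid, Real.sigmoid_def, one_div]

theorem one_add_sq_le_exp_abs (a : ℝ) : 1 + a ^ 2 ≤ 16 * Real.exp (|a| / 2) := by
  have h1 : |a| / 4 + 1 ≤ Real.exp (|a| / 4) := Real.add_one_le_exp _
  have h2 : Real.exp (|a| / 2) = Real.exp (|a| / 4) ^ 2 := by
    rw [← Real.exp_nat_mul]; ring_nf
  nlinarith [abs_nonneg a, sq_abs a]

theorem sigmoid_mul_one_sub_le_exp (a : ℝ) :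
    Real.sigmoid a * (1 - Real.sigmoid a) ≤ Real.exp (-|a|) := by
  have hle b : Real.sigmoid b ≤ Real.exp b := by
    rw [Real.sigmoid_def]
    exact inv_le_of_inv_le₀ (Real.exp_pos b)
      (by rw [← Real.exp_neg]; linarith [Real.exp_pos (-b)])
  have h0 := Real.sigmoid_pos a
  have h1 := Real.sigmoid_lt_one a
  rcases le_total 0 a with ha | ha
  · rw [abs_of_nonneg ha, ← Real.sigmoid_neg]
    have := hle (-a)
    rw [Real.sigmoid_neg] at this ⊢
    nlinarith
  · rw [abs_of_nonpos ha, neg_neg]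
    nlinarith [hle a]

theorem one_add_sq_mul_sqrt_sigmoid_mul_one_sub_le (a : ℝ) :
    (1 + a ^ 2) * √(Real.sigmoid a * (1 - Real.sigmoid a)) ≤ 16 := by
  have hs : √(Real.sigmoid a * (1 - Real.sigmoid a)) ≤ Real.exp (-|a| / 2) := by
    rw [Real.sqrt_le_left (Real.exp_pos _).le, ← Real.exp_nat_mul]
    convert sigmoid_mul_one_sub_le_exp a using 2
    ring
  calc (1 + a ^ 2) * √(Real.sigmoid a * (1 - Real.sigmoid a))
      ≤ 16 * Real.exp (|a| / 2) * Real.exp (-|a| / 2) :=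
        mul_le_mul (one_add_sq_le_exp_abs a) hs (Real.sqrt_nonneg _) (by positivity)
    _ = 16 := by rw [mul_assoc, ← Real.exp_add]; ring_nf; simp

theorem isRegularLink_sigmoid :
    IsRegularLink Real.sigmoid (fun a => Real.sigmoid a * (1 - Real.sigmoid a))
      (fun a => Real.sigmoid a * (1 - Real.sigmoid a) * (1 - 2 * Real.sigmoid a))
      (fun a => Real.sigmoid a * (1 - Real.sigmoid a)) 16 where
  hasDerivAt := Real.hasDerivAt_sigmoid
  hasDerivAt_deriv a :=
    ((Real.hasDerivAt_sigmoid a).mul ((Real.hasDerivAt_sigmoid a).const_sub 1)).congr_deriv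
      (by ring)
  pos a := mul_pos (Real.sigmoid_pos a) (sub_pos.2 (Real.sigmoid_lt_one a))
  le a := mul_le_of_le_one_right (Real.sigmoid_nonneg a) (by linarith [Real.sigmoid_pos a])
  le_one_sub a := mul_le_of_le_one_left (by linarith [Real.sigmoid_lt_one a])
    (Real.sigmoid_le_one a)
  deriv2_le a := by
    show (1 + a ^ 2) * |Real.sigmoid a * (1 - Real.sigmoid a) * (1 - 2 * Real.sigmoid a)| ≤
      16 * √(Real.sigmoid a * (1 - Real.sigmoid a))
    have h2 : |1 - 2 * Real.sigmoid a| ≤ 1 :=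
      abs_le.2 ⟨by linarith [Real.sigmoid_lt_one a], by linarith [Real.sigmoid_pos a]⟩
    have hkey := one_add_sq_mul_sqrt_sigmoid_mul_one_sub_le a
    set p := Real.sigmoid a * (1 - Real.sigmoid a)
    have hp : 0 ≤ p := (mul_pos (Real.sigmoid_pos a) (sub_pos.2 (Real.sigmoid_lt_one a))).le
    calc (1 + a ^ 2) * |p * (1 - 2 * Real.sigmoid a)| ≤ (1 + a ^ 2) * √p * √p := by
          rw [mul_assoc (1 + a ^ 2), Real.mul_self_sqrt hp, abs_mul, abs_of_nonneg hp]
          gcongr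
          exact mul_le_of_le_one_right hp h2
      _ ≤ 16 * √p := by gcongr
  deriv_sq_le a := by
    show (1 + a ^ 2) * (Real.sigmoid a * (1 - Real.sigmoid a)) ^ 2 ≤
      16 * (Real.sigmoid a * (1 - Real.sigmoid a) * √(Real.sigmoid a * (1 - Real.sigmoid a)))
    have hkey := one_add_sq_mul_sqrt_sigmoid_mul_one_sub_le a
    set p := Real.sigmoid a * (1 - Real.sigmoid a)
    have hp : 0 ≤ p := (mul_pos (Real.sigmoid_pos a) (sub_pos.2 (Real.sigmoid_lt_one a))).le
    calc (1 + a ^ 2) * p ^ 2 = (1 + a ^ 2) * √p * (p * √p) := by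
          linear_combination (1 + a ^ 2) * p * (Real.mul_self_sqrt hp).symm
      _ ≤ 16 * (p * √p) := by gcongr

theorem hasDerivAt_integral_Iic {f : ℝ → ℝ} (hf : Integrable f) (hc : Continuous f) (a : ℝ) :
    HasDerivAt (fun b => ∫ t in Iic b, f t) (f a) a := by
  have hrepr : (fun b => ∫ t in Iic b, f t)
      = fun b => (∫ t in Iic 0, f t) + ∫ t in (0)..b, f t := by
    funext b
    rw [← intervalIntegral.integral_Iic_sub_Iic hf.integrableOn hf.integrableOn]
    ring
  rw [hrepr]
  exact (intervalIntegral.integral_hasDerivAt_right hf.intervalIntegrable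
    (hc.stronglyMeasurableAtFilter _ _) hc.continuousAt).const_add _

theorem gaussianPDFReal_zero_one (t : ℝ) :
    gaussianPDFReal 0 1 t = (√(2 * Real.pi))⁻¹ * Real.exp (-t ^ 2 / 2) := by
  simp [gaussianPDFReal]

theorem stdNormalCDF_eq_integral (a : ℝ) :
    stdNormalCDF a = ∫ t in Iic a, gaussianPDFReal 0 1 t := by
  simp only [stdNormalCDF, gaussianPDFReal_zero_one, neg_div]

theorem one_sub_stdNormalCDF_eq_integral (a : ℝ) :
    1 - stdNormalCDF a = ∫ t in Ioi a, gaussianPDFReal 0 1 t := by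
  rw [stdNormalCDF_eq_integral, ← integral_gaussianPDFReal_eq_one 0 one_ne_zero,
    ← integral_add_compl measurableSet_Iic (integrable_gaussianPDFReal 0 1), compl_Iic]
  ring

theorem hasDerivAt_gaussianPDFReal_zero_one (a : ℝ) :
    HasDerivAt (gaussianPDFReal 0 1) (-a * gaussianPDFReal 0 1 a) a := by
  have h : HasDerivAt (fun t : ℝ => -t ^ 2 / 2) (-a) a :=
    ((hasDerivAt_pow 2 a).fun_neg.div_const 2).congr_deriv (by norm_num; ring)
  rw [show gaussianPDFReal 0 1 = fun t => (√(2 * Real.pi))⁻¹ * Real.exp (-t ^ 2 / 2) from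
    funext gaussianPDFReal_zero_one]
  exact (h.exp.const_mul _).congr_deriv (by ring)

theorem le_setIntegral_of_le_on_Ioc {f : ℝ → ℝ} (hf : Integrable f) (hf0 : 0 ≤ f)
    {S : Set ℝ} {u m : ℝ} (hS : Ioc u (u + 1) ⊆ S) (hm : ∀ t ∈ Ioc u (u + 1), m ≤ f t) :
    m ≤ ∫ t in S, f t := by
  calc m = m * volume.real (Ioc u (u + 1)) := by simp
    _ ≤ ∫ t in Ioc u (u + 1), f t :=
        setIntegral_ge_of_const_le_real measurableSet_Ioc (by simp) hm hf.integrableOn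
    _ ≤ ∫ t in S, f t :=
        setIntegral_mono_set hf.integrableOn (Eventually.of_forall hf0) hS.eventuallyLE

theorem one_add_sq_mul_exp_le (a : ℝ) : (1 + a ^ 2) ^ 2 * Real.exp (-a ^ 2 / 16) ≤ 1024 := by
  have h1 : a ^ 2 / 32 + 1 ≤ Real.exp (a ^ 2 / 32) := Real.add_one_le_exp _
  have h2 : Real.exp (a ^ 2 / 32) ^ 2 * Real.exp (-a ^ 2 / 16) = 1 := by
    rw [← Real.exp_nat_mul, ← Real.exp_add]; ring_nf; exact Real.exp_zero
  nlinarith [Real.exp_pos (-a ^ 2 / 16), sq_nonneg a]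

/-- `probitRoot a ^ 2 ≍ e^{-5a²/8}` lies below both tails of `Φ` (which are `≳ e^{-(|a|+1)²/2}`),
while `probitRoot a ≍ e^{-5a²/16}` and `probitRoot a ^ 3 ≍ e^{-15a²/16}` still dominate
`φ'' ≍ a e^{-a²/2}` and `φ² ≍ e^{-a²}` up to polynomial factors. -/
noncomputable def probitRoot (a : ℝ) : ℝ :=
  √(√(2 * Real.pi))⁻¹ * Real.exp (-5 / 4) * Real.exp (-a ^ 2 / 16) ^ 5

theorem gaussianPDFReal_zero_one_eq_pow (a : ℝ) :
    gaussianPDFReal 0 1 a = (√(2 * Real.pi))⁻¹ * Real.exp (-a ^ 2 / 16) ^ 8 := by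
  rw [gaussianPDFReal_zero_one, ← Real.exp_nat_mul]; ring_nf

theorem probitRoot_sq_le_gaussianPDFReal {a t : ℝ} (h : |t| ≤ |a| + 1) :
    probitRoot a ^ 2 ≤ gaussianPDFReal 0 1 t := by
  have hc : 0 ≤ (√(2 * Real.pi))⁻¹ := by positivity
  have hexp : (Real.exp (-5 / 4) * Real.exp (-a ^ 2 / 16) ^ 5) ^ 2
      = Real.exp (-5 / 2 - 5 * a ^ 2 / 8) := by
    rw [← Real.exp_nat_mul, ← Real.exp_add, ← Real.exp_nat_mul]; ring_nf
  rw [probitRoot, mul_assoc, mul_pow, Real.sq_sqrt hc, hexp, gaussianPDFReal_zero_one]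
  refine mul_le_mul_of_nonneg_left (Real.exp_le_exp.2 ?_) hc
  nlinarith [sq_abs t, sq_abs a, abs_nonneg t, sq_nonneg (|a| - 4)]

theorem probitRoot_sq_le_setIntegral {S : Set ℝ} {u a : ℝ} (hS : Ioc u (u + 1) ⊆ S)
    (hu : a - 1 ≤ u) (hu' : u ≤ a) : probitRoot a ^ 2 ≤ ∫ t in S, gaussianPDFReal 0 1 t :=
  le_setIntegral_of_le_on_Ioc (integrable_gaussianPDFReal 0 1) (gaussianPDFReal_nonneg 0 1) hS
    fun t ht => probitRoot_sq_le_gaussianPDFReal (abs_le.2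
      ⟨by linarith [ht.1, neg_abs_le a], by linarith [ht.2, le_abs_self a]⟩)

theorem probitRoot_pos (a : ℝ) : 0 < probitRoot a := by
  have : 0 < √(2 * Real.pi) := by positivity
  unfold probitRoot; positivity

theorem inv_sqrt_two_pi_le_sqrt : (√(2 * Real.pi))⁻¹ ≤ √(√(2 * Real.pi))⁻¹ := by
  have h1 : 1 ≤ √(2 * Real.pi) := Real.one_le_sqrt.2 (by nlinarith [Real.pi_gt_three])
  exact Real.le_sqrt_of_sq_le (by
    rw [inv_pow]; exact inv_anti₀ (by positivity) (by nlinarith))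

theorem isRegularLink_stdNormalCDF :
    IsRegularLink stdNormalCDF (gaussianPDFReal 0 1) (fun a => -a * gaussianPDFReal 0 1 a)
      (fun a => probitRoot a ^ 2) (1024 * Real.exp (15 / 4)) where
  hasDerivAt a := by
    rw [funext stdNormalCDF_eq_integral]
    exact hasDerivAt_integral_Iic (integrable_gaussianPDFReal 0 1) (continuous_iff_continuousAt.2
      fun t => (hasDerivAt_gaussianPDFReal_zero_one t).continuousAt) a
  hasDerivAt_deriv := hasDerivAt_gaussianPDFReal_zero_one
  pos a := pow_pos (probitRoot_pos a) 2
  le a := by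
    rw [stdNormalCDF_eq_integral]
    exact probitRoot_sq_le_setIntegral (u := a - 1)
      (fun t ht => by simp only [mem_Iic]; linarith [ht.2]) le_rfl (by linarith)
  le_one_sub a := by
    rw [one_sub_stdNormalCDF_eq_integral]
    exact probitRoot_sq_le_setIntegral (u := a) (fun t ht => ht.1) (by linarith) le_rfl
  deriv2_le a := by
    have hP := one_add_sq_mul_exp_le a
    rw [Real.sqrt_sq (probitRoot_pos a).le, gaussianPDFReal_zero_one_eq_pow, probitRoot]
    have hc := inv_sqrt_two_pi_le_sqrt
    set c := (√(2 * Real.pi))⁻¹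
    set g := Real.exp (-a ^ 2 / 16)
    have hg : 0 < g := Real.exp_pos _
    have hg1 : g ≤ 1 := Real.exp_le_one_iff.2 (by nlinarith [sq_nonneg a])
    have hE : 1 ≤ Real.exp (15 / 4) * Real.exp (-5 / 4) := by
      rw [← Real.exp_add]; exact Real.one_le_exp (by norm_num)
    have ha : |a| ≤ 1 + a ^ 2 := by nlinarith [sq_abs a, abs_nonneg a]
    calc (1 + a ^ 2) * |-a * (c * g ^ 8)| = (1 + a ^ 2) * |a| * g * (c * g ^ 7) := by
          rw [abs_mul, abs_neg, abs_of_pos (by positivity : 0 < c * g ^ 8)]; ring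
      _ ≤ (1 + a ^ 2) ^ 2 * g * (√c * g ^ 5) := by
          have h1 : (1 + a ^ 2) * |a| ≤ (1 + a ^ 2) ^ 2 :=
            (mul_le_mul_of_nonneg_left ha (by positivity)).trans_eq (sq _).symm
          have h2 : g ^ 7 ≤ g ^ 5 := pow_le_pow_of_le_one hg.le hg1 (by norm_num)
          gcongr
      _ ≤ 1024 * (√c * g ^ 5) := by gcongr
      _ ≤ 1024 * Real.exp (15 / 4) * (√c * Real.exp (-5 / 4) * g ^ 5) := by
          nlinarith [mul_pos (Real.sqrt_pos.2 (by positivity : 0 < c)) (pow_pos hg 5)]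
  deriv_sq_le a := by
    have hP := one_add_sq_mul_exp_le a
    rw [Real.sqrt_sq (probitRoot_pos a).le, gaussianPDFReal_zero_one_eq_pow, probitRoot]
    have hc := inv_sqrt_two_pi_le_sqrt
    have hs : √(√(2 * Real.pi))⁻¹ ^ 2 = (√(2 * Real.pi))⁻¹ := Real.sq_sqrt (by positivity)
    set c := (√(2 * Real.pi))⁻¹
    set g := Real.exp (-a ^ 2 / 16)
    have hE : Real.exp (15 / 4) * Real.exp (-5 / 4) ^ 3 = 1 := by
      rw [← Real.exp_nat_mul, ← Real.exp_add]; norm_num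
    have hw : 1 + a ^ 2 ≤ (1 + a ^ 2) ^ 2 := by nlinarith [sq_nonneg a]
    calc (1 + a ^ 2) * (c * g ^ 8) ^ 2 = (1 + a ^ 2) * g * (c * c * g ^ 15) := by ring
      _ ≤ (1 + a ^ 2) ^ 2 * g * (c * √c * g ^ 15) := by gcongr
      _ ≤ 1024 * (c * √c * g ^ 15) := by gcongr
      _ = 1024 * Real.exp (15 / 4) *
            ((√c * Real.exp (-5 / 4) * g ^ 5) ^ 2 * (√c * Real.exp (-5 / 4) * g ^ 5)) := by
          linear_combination (-1024 * √c ^ 3 * g ^ 15) * hE + (-1024 * √c * g ^ 15) * hs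

theorem stmt_6_general (H : ℝ → ℝ) (hH : H = logisticSigmoid ∨ H = stdNormalCDF)
    (θ₀ : ℝ × ℝ) (hβ₀ : 0 < θ₀.2)
    {Ω : Type*} [MeasurableSpace Ω] (P : Measure Ω) [IsProbabilityMeasure P]
    (X : ℕ → Ω → ℝ)
    (h : ℝ × ℝ) :
    Tendsto
      (fun n : ℕ => ∑ i ∈ Finset.Icc 1 n,
        ∫ ω, DbinQM H θ₀ ((Real.sqrt n)⁻¹ • h) (X i ω) ∂P)
      atTop (nhds 0) := by
  rcases hH with rfl | rfl
  · rw [logisticSigmoid_eq_sigmoid]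
    exact isRegularLink_sigmoid.tendsto_sum_integral_DbinQM hβ₀ P X h
  · exact isRegularLink_stdNormalCDF.tendsto_sum_integral_DbinQM hβ₀ P X h

/-- For `H` the logistic or probit cdf, `θ₀ = (α₀, β₀)` with `β₀ > 0`, and any sequence
`(X_i)` of random variables with values in the lattice `x₁ + dℤ` (in particular for the
Bruceton design), the binary regression family is S-DQM at `θ₀`:
`∑_{i=1}^n E[D_{θ₀,h/√n}(X_i)] → 0` for every `h ∈ ℝ²`. -/
theorem stmt_6 (H : ℝ → ℝ) (hH : H = logisticSigmoid ∨ H = stdNormalCDF)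
    (x₁ d : ℝ) (hd : 0 < d) (θ₀ : ℝ × ℝ) (hβ₀ : 0 < θ₀.2)
    {Ω : Type*} [MeasurableSpace Ω] (P : Measure Ω) [IsProbabilityMeasure P]
    (X : ℕ → Ω → ℝ) (hXm : ∀ i, Measurable (X i))
    (hXlattice : ∀ i ω, ∃ k : ℤ, X i ω = x₁ + d * k)
    (h : ℝ × ℝ) :
    Tendsto
      (fun n : ℕ => ∑ i ∈ Finset.Icc 1 n,
        ∫ ω, DbinQM H θ₀ ((Real.sqrt n)⁻¹ • h) (X i ω) ∂P)
      atTop (nhds 0) :=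
  stmt_6_general H hH θ₀ hβ₀ P X h
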